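/- arXiv:2004.08275 — 3 statements merged into one kernel-verified Lean document; each statement's English description precedes it below -/
import Mathlib

section
/- Let f : ℝ → ℝ be differentiable with f(0) = 0, and suppose there exist constants 0 < Λ₁ ≤ Λ₂ such that Λ₁ ≤ −f'(x) ≤ Λ₂ for all x ∈ ℝ. Then there exists a constant γ ≤ −1 such that for all x ∈ ℝ one has x² + f(x)² ≤ 2γ·x·f(x). -/
/-!
By the mean value theorem, `-f' ≥ Λ₁` gives `x f(x) ≤ -Λ₁ x²` and `|f'| ≤ Λ₂` gives
`f(x)² ≤ Λ₂² x²`. Hence `x² + f(x)² ≤ (1 + Λ₂²) x² ≤ -((1 + Λ₂²) / Λ₁) x f(x)`, and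
`γ = -(1 + Λ₂²) / (2 Λ₁)` works, since `2 Λ₁ ≤ 2 Λ₂ ≤ 1 + Λ₂²`.
-/

lemma mul_le_mul_sq_of_deriv_le {f : ℝ → ℝ} {C : ℝ} (hf : Differentiable ℝ f) (h0 : f 0 = 0)
    (h : ∀ x, deriv f x ≤ C) (x : ℝ) : x * f x ≤ C * x ^ 2 := by
  rcases le_total 0 x with hx | hx
  · have := image_sub_le_mul_sub_of_deriv_le hf h hx
    rw [h0, sub_zero, sub_zero] at this
    nlinarith
  · have := image_sub_le_mul_sub_of_deriv_le hf h hx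
    rw [h0, zero_sub, zero_sub] at this
    nlinarith

lemma sq_le_mul_sq_of_abs_deriv_le {f : ℝ → ℝ} {C : ℝ} (hf : Differentiable ℝ f) (h0 : f 0 = 0)
    (h : ∀ x, |deriv f x| ≤ C) (x : ℝ) : f x ^ 2 ≤ C ^ 2 * x ^ 2 := by
  have hlip : |f x| ≤ C * |x| := by
    simpa [h0] using
      Convex.norm_image_sub_le_of_norm_deriv_le (fun y _ => hf y) (fun y _ => h y) convex_univ
        (Set.mem_univ 0) (Set.mem_univ x)
  calc f x ^ 2 = |f x| ^ 2 := (sq_abs _).symm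
    _ ≤ (C * |x|) ^ 2 := pow_le_pow_left₀ (abs_nonneg _) hlip 2
    _ = C ^ 2 * x ^ 2 := by rw [mul_pow, sq_abs]

theorem stmt_5 (f : ℝ → ℝ) (hf : Differentiable ℝ f) (h0 : f 0 = 0)
    (Λ₁ Λ₂ : ℝ) (hΛ₁ : 0 < Λ₁) (hΛ₁₂ : Λ₁ ≤ Λ₂)
    (hd : ∀ x : ℝ, Λ₁ ≤ -deriv f x ∧ -deriv f x ≤ Λ₂) :
    ∃ γ : ℝ, γ ≤ -1 ∧ ∀ x : ℝ, x ^ 2 + f x ^ 2 ≤ 2 * γ * x * f x := by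
  have hmul : ∀ x, x * f x ≤ -Λ₁ * x ^ 2 :=
    mul_le_mul_sq_of_deriv_le hf h0 fun x => by linarith [(hd x).1]
  have hsq : ∀ x, f x ^ 2 ≤ Λ₂ ^ 2 * x ^ 2 :=
    sq_le_mul_sq_of_abs_deriv_le hf h0 fun x =>
      abs_le.mpr ⟨by linarith [(hd x).2], by linarith [(hd x).1]⟩
  set c := (1 + Λ₂ ^ 2) / (2 * Λ₁) with hc_def
  have hc : 2 * c * Λ₁ = 1 + Λ₂ ^ 2 := by rw [hc_def]; field_simp
  refine ⟨-c, ?_, fun x => ?_⟩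
  · rw [neg_le_neg_iff, le_div_iff₀ (by positivity)]
    nlinarith [sq_nonneg (Λ₂ - 1)]
  · calc x ^ 2 + f x ^ 2 ≤ (1 + Λ₂ ^ 2) * x ^ 2 := by linarith [hsq x]
      _ = 2 * c * (Λ₁ * x ^ 2) := by rw [← hc]; ring
      _ ≤ 2 * c * -(x * f x) :=
          mul_le_mul_of_nonneg_left (by linarith [hmul x]) (by positivity)
      _ = 2 * -c * x * f x := by ring
end

section
/- Let f : ℝ → ℝ be continuously differentiable with f'(x) < 0 for all x ∈ ℝ and f(0) = 0, and let σ₀ > 0. Then there exists a constant γ ≤ −1 such that for every x ∈ ℝ with x² + f(x)² ≤ σ₀² one has x² + f(x)² ≤ 2γ·x·f(x). -/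
/-! The difference quotient `q = dslope f 0` is continuous and, since `f` is strictly
decreasing, negative everywhere; as `f 0 = 0` we have `f x = x q(x)`, so the claim becomes
`1 + q(x)² ≤ 2γ q(x)`, i.e. `γ ≤ (1 + q²) / (2q)`. On the compact set `|x| ≤ |σ₀|` the
right-hand side is continuous and hence bounded below. -/

open Set

theorem continuous_dslope {𝕜 E : Type*} [NontriviallyNormedField 𝕜] [NormedAddCommGroup E]
    [NormedSpace 𝕜 E] {f : 𝕜 → E} (hf : Differentiable 𝕜 f) (a : 𝕜) :
    Continuous (dslope f a) :=
  continuousOn_univ.mp <|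
    (continuousOn_dslope Filter.univ_mem).mpr ⟨hf.continuous.continuousOn, hf a⟩

theorem dslope_neg_of_deriv_neg {f : ℝ → ℝ} (hd : ∀ x, deriv f x < 0) (a b : ℝ) :
    dslope f a b < 0 := by
  rcases eq_or_ne b a with rfl | hba
  · simpa only [dslope_same] using hd b
  · rw [dslope_of_ne f hba]
    exact ((strictAnti_of_deriv_neg hd).strictAntiOn univ).slope_neg (mem_univ a) (mem_univ b)
      hba.symm

theorem IsCompact.exists_le_neg_one_forall_one_add_sq_le {α : Type*} [TopologicalSpace α]
    {K : Set α} (hK : IsCompact K) {g : α → ℝ} (hg : ContinuousOn g K)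
    (hneg : ∀ x ∈ K, g x < 0) :
    ∃ γ ≤ -1, ∀ x ∈ K, 1 + g x ^ 2 ≤ 2 * γ * g x := by
  have hr : ContinuousOn (fun x => (1 + g x ^ 2) / (2 * g x)) K :=
    (continuousOn_const.add (hg.pow 2)).div (continuousOn_const.mul hg)
      fun x hx => by linarith [hneg x hx]
  obtain ⟨b, hb⟩ := hK.bddBelow_image hr
  refine ⟨min b (-1), min_le_right _ _, fun x hx => ?_⟩
  have hγ : min b (-1) ≤ (1 + g x ^ 2) / (2 * g x) :=
    (min_le_left _ _).trans (hb (mem_image_of_mem _ hx))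
  have := (le_div_iff_of_neg (by linarith [hneg x hx])).mp hγ
  linarith

theorem stmt_6_general (f : ℝ → ℝ)
    (hd : ∀ x : ℝ, deriv f x < 0) (h0 : f 0 = 0)
    (σ₀ : ℝ) :
    ∃ γ : ℝ, γ ≤ -1 ∧
      ∀ x : ℝ, x ^ 2 + f x ^ 2 ≤ σ₀ ^ 2 →
        x ^ 2 + f x ^ 2 ≤ 2 * γ * x * f x := by
  have hdiff : Differentiable ℝ f := fun x => differentiableAt_of_deriv_ne_zero (hd x).ne
  obtain ⟨γ, hγ, hbound⟩ :=
    (isCompact_Icc (a := -|σ₀|) (b := |σ₀|)).exists_le_neg_one_forall_one_add_sq_le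
      (continuous_dslope hdiff 0).continuousOn fun x _ => dslope_neg_of_deriv_neg hd 0 x
  refine ⟨γ, hγ, fun x hx => ?_⟩
  have hxK : x ∈ Icc (-|σ₀|) |σ₀| :=
    abs_le.mp (sq_le_sq.mp (by nlinarith [sq_nonneg (f x)]))
  have hfx : f x = x * dslope f 0 x := by simpa [h0] using (sub_smul_dslope f 0 x).symm
  rw [hfx]
  calc x ^ 2 + (x * dslope f 0 x) ^ 2 = x ^ 2 * (1 + dslope f 0 x ^ 2) := by ring
    _ ≤ x ^ 2 * (2 * γ * dslope f 0 x) := mul_le_mul_of_nonneg_left (hbound x hxK) (sq_nonneg x)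
    _ = 2 * γ * x * (x * dslope f 0 x) := by ring

theorem stmt_6 (f : ℝ → ℝ) (hf : ContDiff ℝ 1 f)
    (hd : ∀ x : ℝ, deriv f x < 0) (h0 : f 0 = 0)
    (σ₀ : ℝ) (hσ₀ : 0 < σ₀) :
    ∃ γ : ℝ, γ ≤ -1 ∧
      ∀ x : ℝ, x ^ 2 + f x ^ 2 ≤ σ₀ ^ 2 →
        x ^ 2 + f x ^ 2 ≤ 2 * γ * x * f x :=
  stmt_6_general f hd h0 σ₀
end

section
/- Let a < 0 and define F_b(t) := t/(1 − b·t) wherever 1 − b·t ≠ 0. Let s₀ be a real number with 1/a < s₀ < 0, and let φ : [0,∞) → ℝ be strictly decreasing with φ(0) = 0 and s₀ ≤ φ(x) ≤ 0 for all x ≥ 0, and assume φ has a (right) derivative φ'(0) at 0. Define ψ on [0, −1/a) by ψ(x) := F_a(φ(F_{−a}(x))). Then ψ is well defined (that is, 1 + a·x > 0 and 1 − a·φ(F_{−a}(x)) > 0 for all x ∈ [0,−1/a)), ψ(0) = 0, ψ is strictly decreasing on [0, −1/a), and ψ has right derivative φ'(0) at 0. -/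
/-!
With `F_b t = t / (1 - b t)` we have `ψ = F_a ∘ φ ∘ F_{-a}`. On `[0, -1/a)` the map `F_{-a}`
is well defined, increasing and nonnegative; `φ` then takes values in `[s₀, 0]`, where
`1 - a t > 0` because `s₀ > 1/a`, so `F_a` is defined and increasing there. Hence `ψ` is an
increasing–decreasing–increasing composition, and since `F_b(0) = 0`, `F_b'(0) = 1` and
`φ(0) = 0`, the chain rule gives `ψ'(0) = φ'(0)`.
-/

noncomputable def parallelCurvature (b t : ℝ) : ℝ := t / (1 - b * t)

lemma parallelCurvature_zero (b : ℝ) : parallelCurvature b 0 = 0 := by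
  simp [parallelCurvature]

lemma parallelCurvature_neg (b t : ℝ) : parallelCurvature (-b) t = t / (1 + b * t) := by
  simp [parallelCurvature]

lemma strictMonoOn_parallelCurvature (b : ℝ) :
    StrictMonoOn (parallelCurvature b) {t | 0 < 1 - b * t} := by
  intro t ht s hs hts
  rw [parallelCurvature, parallelCurvature, div_lt_div_iff₀ ht hs]
  linarith [show t * (1 - b * s) - s * (1 - b * t) = t - s by ring]

lemma hasDerivAt_parallelCurvature_zero (b : ℝ) : HasDerivAt (parallelCurvature b) 1 0 := by
  have hden : HasDerivAt (fun t : ℝ => 1 - b * t) (-b) 0 := by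
    simpa using ((hasDerivAt_id (0 : ℝ)).const_mul b).const_sub 1
  show HasDerivAt (fun t => t / (1 - b * t)) 1 0
  simpa using (hasDerivAt_id' (0 : ℝ)).fun_div hden (by simp)

lemma one_add_mul_pos_of_lt_neg_inv {a x : ℝ} (ha : a < 0) (hx : x < -1 / a) :
    0 < 1 + a * x := by
  have : a * (-1 / a) = -1 := mul_div_cancel₀ _ ha.ne
  linarith [mul_lt_mul_of_neg_left hx ha]

lemma one_sub_mul_pos_of_inv_lt {a t : ℝ} (ha : a < 0) (ht : 1 / a < t) :
    0 < 1 - a * t := by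
  have : a * (1 / a) = 1 := mul_div_cancel₀ _ ha.ne
  linarith [mul_lt_mul_of_neg_left ht ha]

theorem stmt_18_general (a : ℝ) (ha : a < 0)
    (s₀ : ℝ) (hs₀ : 1 / a < s₀)
    (φ : ℝ → ℝ) (hφanti : StrictAntiOn φ (Set.Ici 0)) (hφ0 : φ 0 = 0)
    (hφbd : ∀ x : ℝ, 0 ≤ x → s₀ ≤ φ x ∧ φ x ≤ 0)
    (d : ℝ) (hd : HasDerivWithinAt φ d (Set.Ici 0) 0)
    (ψ : ℝ → ℝ)
    (hψ : ∀ x : ℝ, ψ x = (φ (x / (1 + a * x))) / (1 - a * φ (x / (1 + a * x)))) :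
    (∀ x : ℝ, 0 ≤ x → x < -1 / a →
        0 < 1 + a * x ∧ 0 < 1 - a * φ (x / (1 + a * x))) ∧
      ψ 0 = 0 ∧
      StrictAntiOn ψ (Set.Ico 0 (-1 / a)) ∧
      HasDerivWithinAt ψ d (Set.Ici 0) 0 := by
  set I := Set.Ico 0 (-1 / a)
  have hden : ∀ x ∈ I, 0 < 1 + a * x := fun x hx => one_add_mul_pos_of_lt_neg_inv ha hx.2
  have hmaps : Set.MapsTo (parallelCurvature (-a)) I (Set.Ici 0) := fun x hx => by
    simpa [parallelCurvature_neg] using div_nonneg hx.1 (hden x hx).le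
  have hφden : Set.MapsTo φ (Set.Ici 0) {t | 0 < 1 - a * t} := fun y hy =>
    one_sub_mul_pos_of_inv_lt ha (hs₀.trans_le (hφbd y hy).1)
  have hψ_eq : ψ = parallelCurvature a ∘ φ ∘ parallelCurvature (-a) := by
    funext x
    simp [hψ, parallelCurvature]
  refine ⟨fun x hx hx' => ⟨hden x ⟨hx, hx'⟩, ?_⟩, by simp [hψ, hφ0], ?_, ?_⟩
  · simpa [parallelCurvature_neg] using hφden (hmaps ⟨hx, hx'⟩)
  · rw [hψ_eq]
    have hI : I ⊆ {t | 0 < 1 - -a * t} := fun x hx => by simpa using hden x hx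
    exact (strictMonoOn_parallelCurvature a).comp_strictAntiOn
      (hφanti.comp_strictMonoOn ((strictMonoOn_parallelCurvature (-a)).mono hI) hmaps)
      (hφden.comp hmaps)
  · have hinner : HasDerivWithinAt (φ ∘ parallelCurvature (-a)) (d * 1) I 0 := by
      refine HasDerivWithinAt.comp 0 ?_ (hasDerivAt_parallelCurvature_zero (-a)).hasDerivWithinAt
        hmaps
      rwa [parallelCurvature_zero]
    have houter : HasDerivAt (parallelCurvature a) 1 ((φ ∘ parallelCurvature (-a)) 0) := by
      simpa [parallelCurvature_zero, hφ0] using hasDerivAt_parallelCurvature_zero a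
    have hI : I ∈ nhdsWithin (0 : ℝ) (Set.Ici 0) :=
      Ico_mem_nhdsGE (by rw [neg_div]; exact neg_pos.2 (one_div_neg.2 ha))
    rw [hψ_eq]
    simpa using (houter.comp_hasDerivWithinAt 0 hinner).mono_of_mem_nhdsWithin hI

theorem stmt_18 (a : ℝ) (ha : a < 0)
    (s₀ : ℝ) (hs₀ : 1 / a < s₀) (hs₀' : s₀ < 0)
    (φ : ℝ → ℝ) (hφanti : StrictAntiOn φ (Set.Ici 0)) (hφ0 : φ 0 = 0)
    (hφbd : ∀ x : ℝ, 0 ≤ x → s₀ ≤ φ x ∧ φ x ≤ 0)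
    (d : ℝ) (hd : HasDerivWithinAt φ d (Set.Ici 0) 0)
    (ψ : ℝ → ℝ)
    (hψ : ∀ x : ℝ, ψ x = (φ (x / (1 + a * x))) / (1 - a * φ (x / (1 + a * x)))) :
    (∀ x : ℝ, 0 ≤ x → x < -1 / a →
        0 < 1 + a * x ∧ 0 < 1 - a * φ (x / (1 + a * x))) ∧
      ψ 0 = 0 ∧
      StrictAntiOn ψ (Set.Ico 0 (-1 / a)) ∧
      HasDerivWithinAt ψ d (Set.Ici 0) 0 :=
  stmt_18_general a ha s₀ hs₀ φ hφanti hφ0 hφbd d hd ψ hψ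
end
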